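/- Let d ≥ 1 and let p_t(x,y) = Σ_{n=0}^∞ e^{−2dt} (2dt)^n / n! · q_n(y − x) be the transition probabilities of the continuous-time simple random walk on ℤ^d. Then p_t(𝟎,𝟎) = Θ(t^{−d/2}) as t → ∞; that is, there exist constants 0 < c ≤ C < ∞ such that c t^{−d/2} ≤ p_t(𝟎,𝟎) ≤ C t^{−d/2} for all t ≥ 1. -/

import Mathlib

open Real MeasureTheory Filter

/-- `n`-step distribution of the discrete-time simple random walk on `ℤ^d`:
`q 0 = δ₀` and `q (n+1) z = (2d)⁻¹ ∑_{e : ‖e‖₁ = 1} q n (z - e)`, the set of `e` with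
`‖e‖₁ = 1` being the `2d` vectors `± eᵢ`. -/
noncomputable def srwStep (d : ℕ) : ℕ → (Fin d → ℤ) → ℝ
  | 0, z => if z = 0 then 1 else 0
  | n + 1, z =>
      (2 * d : ℝ)⁻¹ *
        ∑ i : Fin d, (srwStep d n (z - Pi.single i 1) + srwStep d n (z + Pi.single i 1))

/-- Transition probabilities `p_t(x,y) = ∑_{n} e^{-2dt} (2dt)^n / n! ⬝ q_n (y - x)` of the
continuous-time simple random walk on `ℤ^d`. -/
noncomputable def srwP (d : ℕ) (t : ℝ) (x y : Fin d → ℤ) : ℝ :=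
  ∑' n : ℕ, Real.exp (-(2 * d) * t) * (2 * d * t) ^ n / (n.factorial : ℝ) * srwStep d n (y - x)

/-!
Fourier inversion on the torus `[-π, π]^d` gives
`q_n(z) = (2π)^{-d} ∫ φ(θ)^n ∏ᵢ cos (zᵢ θᵢ) dθ`, where `φ(θ) = d⁻¹ ∑ᵢ cos θᵢ` is the
characteristic function of one step. Summing the Poisson series under the integral turns
`e^{-2dt} e^{2dt φ(θ)}` into `∏ᵢ e^{2t (cos θᵢ - 1)}`, so the coordinates decouple and
`p_t(0,0) = ((2π)⁻¹ ∫_{-π}^{π} e^{2t (cos x - 1)} dx)^d`. The one-dimensional integral is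
`Θ(t^{-1/2})`: `cos x ≥ 1 - x²/2` keeps the integrand above `e^{-1}` on `|x| ≤ t^{-1/2}`, and
`cos x ≤ 1 - 2x²/π²` on `[-π, π]` dominates it by a Gaussian with integral `√(π³/(4t))`.
-/

open Set

lemma setIntegral_cos_intCast_mul (m : ℤ) :
    ∫ x in Icc (-π) π, cos (m * x) = if m = 0 then 2 * π else 0 := by
  rw [integral_Icc_eq_integral_Ioc, ← intervalIntegral.integral_of_le (by linarith [pi_pos])]
  split_ifs with hm
  · simp [hm, two_mul]
  · rw [intervalIntegral.integral_comp_mul_left cos (Int.cast_ne_zero.mpr hm), integral_cos,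
      mul_neg, sin_neg, sin_int_mul_pi]
    simp

theorem MeasureTheory.hasSum_integral_pow_div_factorial {α : Type*} [MeasurableSpace α]
    {μ : Measure α} [IsFiniteMeasure μ] {f : α → ℝ} {M : ℝ} (hf : AEStronglyMeasurable f μ)
    (hfM : ∀ᵐ x ∂μ, |f x| ≤ M) :
    HasSum (fun n : ℕ => ∫ x, f x ^ n / n.factorial ∂μ) (∫ x, exp (f x) ∂μ) := by
  refine hasSum_integral_of_dominated_convergence (fun n _ => M ^ n / n.factorial)
    (fun n => by fun_prop) (fun n => hfM.mono fun x hx => ?_)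
    (ae_of_all _ fun _ => Real.summable_pow_div_factorial M) (integrable_const _)
    (ae_of_all _ fun x => ?_)
  · rw [Real.norm_eq_abs, abs_div, abs_pow, Nat.abs_cast]
    gcongr
  · rw [Real.exp_eq_exp_ℝ]
    exact NormedSpace.expSeries_div_hasSum_exp (f x)

lemma Real.rpow_neg_natCast_div_two {t : ℝ} (ht : 0 ≤ t) (n : ℕ) :
    t ^ (-(n : ℝ) / 2) = ((√t)⁻¹) ^ n := by
  rw [sqrt_eq_rpow, ← rpow_neg ht, ← rpow_natCast, ← rpow_mul ht]
  ring_nf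

lemma integrableOn_exp_mul_cos_sub_one (t : ℝ) :
    IntegrableOn (fun x => exp (2 * t * (cos x - 1))) (Icc (-π) π) :=
  (by fun_prop : Continuous fun x => exp (2 * t * (cos x - 1))).integrableOn_Icc

lemma le_integral_exp_mul_cos_sub_one {t : ℝ} (ht : 1 ≤ t) :
    2 * exp (-1) * (√t)⁻¹ ≤ ∫ x in Icc (-π) π, exp (2 * t * (cos x - 1)) := by
  set s := (√t)⁻¹
  have hs0 : 0 < s := inv_pos.mpr (sqrt_pos.mpr (by linarith))
  have hs1 : s ≤ 1 := inv_le_one_of_one_le₀ (one_le_sqrt.mpr ht)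
  have hts : t * s ^ 2 = 1 := by
    rw [inv_pow, sq_sqrt (by linarith), mul_inv_cancel₀ (by linarith)]
  have hsub : Icc (-s) s ⊆ Icc (-π) π :=
    Icc_subset_Icc (by linarith [pi_gt_three]) (by linarith [pi_gt_three])
  have hpointwise : ∀ x ∈ Icc (-s) s, exp (-1) ≤ exp (2 * t * (cos x - 1)) := fun x hx => by
    have hx2 : x ^ 2 ≤ s ^ 2 := sq_le_sq' hx.1 hx.2
    rw [exp_le_exp]
    nlinarith [one_sub_sq_div_two_le_cos (x := x)]
  calc 2 * exp (-1) * s = ∫ _ in Icc (-s) s, exp (-1) := by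
        rw [setIntegral_const, volume_real_Icc_of_le (by linarith), smul_eq_mul]
        ring
    _ ≤ ∫ x in Icc (-s) s, exp (2 * t * (cos x - 1)) :=
        setIntegral_mono_on (integrableOn_const measure_Icc_lt_top.ne)
          ((integrableOn_exp_mul_cos_sub_one t).mono_set hsub) measurableSet_Icc hpointwise
    _ ≤ ∫ x in Icc (-π) π, exp (2 * t * (cos x - 1)) :=
        setIntegral_mono_set (integrableOn_exp_mul_cos_sub_one t)
          (ae_of_all _ fun _ => (exp_pos _).le) hsub.eventuallyLE

lemma integral_exp_mul_cos_sub_one_le {t : ℝ} (ht : 0 < t) :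
    ∫ x in Icc (-π) π, exp (2 * t * (cos x - 1)) ≤ √(π ^ 3 / 4) * (√t)⁻¹ := by
  have hb : 0 < 4 * t / π ^ 2 := by positivity
  have hgauss := integrable_exp_neg_mul_sq hb
  have hpointwise : ∀ x ∈ Icc (-π) π,
      exp (2 * t * (cos x - 1)) ≤ exp (-(4 * t / π ^ 2) * x ^ 2) := fun x hx => by
    have hcos := cos_le_one_sub_mul_cos_sq (abs_le.mpr hx)
    have hquad : 2 * t * (cos x - 1) ≤ 2 * t * (-(2 / π ^ 2 * x ^ 2)) := by
      gcongr
      linarith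
    rw [exp_le_exp]
    linarith [show 2 * t * (-(2 / π ^ 2 * x ^ 2)) = -(4 * t / π ^ 2) * x ^ 2 by ring]
  calc ∫ x in Icc (-π) π, exp (2 * t * (cos x - 1))
      ≤ ∫ x in Icc (-π) π, exp (-(4 * t / π ^ 2) * x ^ 2) :=
        setIntegral_mono_on (integrableOn_exp_mul_cos_sub_one t) hgauss.integrableOn
          measurableSet_Icc hpointwise
    _ ≤ ∫ x, exp (-(4 * t / π ^ 2) * x ^ 2) :=
        setIntegral_le_integral hgauss (ae_of_all _ fun _ => (exp_pos _).le)
    _ = √(π ^ 3 / 4) * (√t)⁻¹ := by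
        rw [integral_gaussian, ← sqrt_inv, ← sqrt_mul (by positivity)]
        congr 1
        field_simp

namespace SimpleRandomWalk

noncomputable abbrev torusMeasure (d : ℕ) : Measure (Fin d → ℝ) :=
  Measure.pi fun _ => volume.restrict (Icc (-π) π)

noncomputable def stepChar (d : ℕ) (θ : Fin d → ℝ) : ℝ := (d : ℝ)⁻¹ * ∑ i, cos (θ i)

/-- `q_n` is even in each coordinate, so this real kernel can stand in for the Fourier character
`e^{i z·θ}`. -/
noncomputable def cosKernel {d : ℕ} (z : Fin d → ℤ) (θ : Fin d → ℝ) : ℝ := ∏ i, cos (z i * θ i)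

variable {d : ℕ}

lemma continuous_stepChar : Continuous (stepChar d) := by
  unfold stepChar; fun_prop

lemma continuous_cosKernel (z : Fin d → ℤ) : Continuous (cosKernel z) := by
  unfold cosKernel; fun_prop

lemma abs_stepChar_le_one (θ : Fin d → ℝ) : |stepChar d θ| ≤ 1 := by
  rw [stepChar, abs_mul, abs_inv, Nat.abs_cast]
  calc (d : ℝ)⁻¹ * |∑ i, cos (θ i)| ≤ (d : ℝ)⁻¹ * ∑ _i : Fin d, (1 : ℝ) := by
        gcongr
        exact (Finset.abs_sum_le_sum_abs _ _).trans
          (Finset.sum_le_sum fun i _ => abs_cos_le_one _)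
    _ ≤ 1 := by simpa using inv_mul_le_one_of_le₀ le_rfl (Nat.cast_nonneg d)

lemma abs_cosKernel_le_one (z : Fin d → ℤ) (θ : Fin d → ℝ) : |cosKernel z θ| ≤ 1 := by
  rw [cosKernel, Finset.abs_prod]
  exact Finset.prod_le_one (fun _ _ => abs_nonneg _) fun _ _ => abs_cos_le_one _

lemma natCast_mul_stepChar (θ : Fin d → ℝ) : d * stepChar d θ = ∑ i, cos (θ i) := by
  rcases eq_or_ne d 0 with rfl | hd
  · simp
  · rw [stepChar, mul_inv_cancel_left₀ (Nat.cast_ne_zero.mpr hd)]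

lemma integrable_stepChar_pow_mul_cosKernel (n : ℕ) (z : Fin d → ℤ) :
    Integrable (fun θ => stepChar d θ ^ n * cosKernel z θ) (torusMeasure d) := by
  refine Integrable.of_bound
    ((continuous_stepChar.pow n).mul (continuous_cosKernel z)).aestronglyMeasurable 1
    (ae_of_all _ fun θ => ?_)
  rw [Real.norm_eq_abs, abs_mul, abs_pow]
  exact mul_le_one₀ (pow_le_one₀ (abs_nonneg _) (abs_stepChar_le_one θ)) (abs_nonneg _)
    (abs_cosKernel_le_one z θ)

lemma integral_cosKernel (z : Fin d → ℤ) :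
    ∫ θ, cosKernel z θ ∂torusMeasure d = if z = 0 then (2 * π) ^ d else 0 := by
  simp only [cosKernel]
  rw [integral_fintype_prod_eq_prod (𝕜 := ℝ) fun i x => cos (z i * x)]
  simp_rw [setIntegral_cos_intCast_mul]
  split_ifs with hz
  · simp [hz]
  · obtain ⟨i, hi⟩ := Function.ne_iff.mp hz
    exact Finset.prod_eq_zero (Finset.mem_univ i) (if_neg hi)

lemma cosKernel_add_single (z : Fin d → ℤ) (i : Fin d) (m : ℤ) (θ : Fin d → ℝ) :
    cosKernel (z + Pi.single i m) θ
      = cos ((z i + m) * θ i) * ∏ j ∈ Finset.univ.erase i, cos (z j * θ j) := by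
  rw [cosKernel, ← Finset.mul_prod_erase _ _ (Finset.mem_univ i)]
  congr 1
  · simp
  · refine Finset.prod_congr rfl fun j hj => ?_
    simp [Pi.single_eq_of_ne (Finset.ne_of_mem_erase hj)]

lemma cosKernel_sub_single_add_cosKernel_add_single (z : Fin d → ℤ) (i : Fin d)
    (θ : Fin d → ℝ) :
    cosKernel (z - Pi.single i 1) θ + cosKernel (z + Pi.single i 1) θ
      = 2 * cos (θ i) * cosKernel z θ := by
  have hz : cosKernel z θ = cosKernel (z + Pi.single i 0) θ := by simp
  rw [sub_eq_add_neg, ← Pi.single_neg, hz, cosKernel_add_single, cosKernel_add_single,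
    cosKernel_add_single, ← add_mul, ← mul_assoc]
  congr 1
  push_cast
  rw [add_zero, add_mul, add_mul, neg_one_mul, one_mul, ← sub_eq_add_neg, cos_sub, cos_add]
  ring

theorem srwStep_eq_integral (n : ℕ) (z : Fin d → ℤ) :
    srwStep d n z
      = ((2 * π) ^ d)⁻¹ * ∫ θ, stepChar d θ ^ n * cosKernel z θ ∂torusMeasure d := by
  induction n generalizing z with
  | zero =>
    simp only [pow_zero, one_mul, integral_cosKernel]
    split_ifs with hz
    · simp [srwStep, hz, pi_pos.ne']
    · simp [srwStep, hz]
  | succ n ih =>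
    have hpointwise : ∀ θ, stepChar d θ ^ (n + 1) * cosKernel z θ
        = ∑ i, (2 * d : ℝ)⁻¹ * (stepChar d θ ^ n * cosKernel (z - Pi.single i 1) θ
            + stepChar d θ ^ n * cosKernel (z + Pi.single i 1) θ) := by
      intro θ
      simp_rw [← mul_add, cosKernel_sub_single_add_cosKernel_add_single]
      calc stepChar d θ ^ (n + 1) * cosKernel z θ
          = stepChar d θ ^ n * cosKernel z θ * ((d : ℝ)⁻¹ * ∑ i, cos (θ i)) := by
            rw [← stepChar]; ring
        _ = _ := by
            rw [Finset.mul_sum, Finset.mul_sum]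
            exact Finset.sum_congr rfl fun i _ => by ring
    have hint (w : Fin d → ℤ) := integrable_stepChar_pow_mul_cosKernel n w
    rw [srwStep, integral_congr_ae (ae_of_all _ hpointwise),
      integral_finsetSum _ fun i _ => ?_,
      Finset.mul_sum, Finset.mul_sum]
    · refine Finset.sum_congr rfl fun i _ => ?_
      rw [integral_const_mul, integral_add (hint _) (hint _), ih, ih]
      ring
    · exact ((hint _).add (hint _)).const_mul _

lemma exp_mul_exp_stepChar (t : ℝ) (θ : Fin d → ℝ) :
    exp (-(2 * d) * t) * exp (2 * d * t * stepChar d θ)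
      = ∏ i, exp (2 * t * (cos (θ i) - 1)) := by
  rw [← exp_add, ← exp_sum]
  congr 1
  simp only [mul_sub, mul_one, Finset.sum_sub_distrib, ← Finset.mul_sum, Finset.sum_const,
    Finset.card_univ, Fintype.card_fin, nsmul_eq_mul]
  linear_combination 2 * t * natCast_mul_stepChar θ

theorem srwP_zero_zero_eq_pow (t : ℝ) :
    srwP d t 0 0 = ((2 * π)⁻¹ * ∫ x in Icc (-π) π, exp (2 * t * (cos x - 1))) ^ d := by
  have hterm (n : ℕ) : exp (-(2 * d) * t) * (2 * d * t) ^ n / n.factorial * srwStep d n (0 - 0)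
      = exp (-(2 * d) * t) * ((2 * π) ^ d)⁻¹ *
          ∫ θ, (2 * d * t * stepChar d θ) ^ n / n.factorial ∂torusMeasure d := by
    simp_rw [sub_zero, srwStep_eq_integral, mul_pow _ (stepChar d _), integral_div,
      integral_const_mul]
    simp only [cosKernel, Pi.zero_apply, Int.cast_zero, zero_mul, cos_zero,
      Finset.prod_const_one, mul_one]
    ring
  have hbound (θ : Fin d → ℝ) : |2 * d * t * stepChar d θ| ≤ |2 * d * t| := by
    rw [abs_mul]
    exact mul_le_of_le_one_right (abs_nonneg _) (abs_stepChar_le_one θ)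
  have hseries := (hasSum_integral_pow_div_factorial (μ := torusMeasure d)
    (f := fun θ => 2 * d * t * stepChar d θ)
    (continuous_const.mul continuous_stepChar).aestronglyMeasurable
    (ae_of_all _ hbound)).mul_left (exp (-(2 * d) * t) * ((2 * π) ^ d)⁻¹)
  rw [srwP, tsum_congr hterm, hseries.tsum_eq, mul_right_comm, ← integral_const_mul]
  simp_rw [exp_mul_exp_stepChar]
  rw [integral_fintype_prod_eq_pow (fun x => exp (2 * t * (cos x - 1))), Fintype.card_fin,
    mul_pow (2 * π)⁻¹, inv_pow, mul_comm]

end SimpleRandomWalk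

theorem srwP_diagonal_asymptotics_general (d : ℕ) :
    ∃ c C : ℝ, 0 < c ∧ c ≤ C ∧ ∀ t : ℝ, 1 ≤ t →
      c * t ^ (-(d : ℝ) / 2) ≤ srwP d t 0 0 ∧ srwP d t 0 0 ≤ C * t ^ (-(d : ℝ) / 2) := by
  have bounds : ∀ t : ℝ, 1 ≤ t →
      ((2 * π)⁻¹ * (2 * exp (-1))) ^ d * t ^ (-(d : ℝ) / 2) ≤ srwP d t 0 0 ∧
        srwP d t 0 0 ≤ ((2 * π)⁻¹ * √(π ^ 3 / 4)) ^ d * t ^ (-(d : ℝ) / 2) := by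
    intro t ht
    have ht0 : 0 < t := by linarith
    rw [SimpleRandomWalk.srwP_zero_zero_eq_pow, rpow_neg_natCast_div_two ht0.le, ← mul_pow,
      ← mul_pow]
    have hlower := le_integral_exp_mul_cos_sub_one ht
    have hupper := integral_exp_mul_cos_sub_one_le ht0
    exact ⟨pow_le_pow_left₀ (by positivity) (by rw [mul_assoc]; gcongr) d,
      pow_le_pow_left₀ (by positivity) (by rw [mul_assoc]; gcongr) d⟩
  refine ⟨_, _, by positivity, ?_, bounds⟩
  simpa using (bounds 1 le_rfl).1.trans (bounds 1 le_rfl).2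

/-- Local CLT-type on-diagonal bounds: `p_t(𝟎,𝟎) = Θ(t^{-d/2})` as `t → ∞`. -/
theorem srwP_diagonal_asymptotics (d : ℕ) (hd : 1 ≤ d) :
    ∃ c C : ℝ, 0 < c ∧ c ≤ C ∧ ∀ t : ℝ, 1 ≤ t →
      c * t ^ (-(d : ℝ) / 2) ≤ srwP d t 0 0 ∧ srwP d t 0 0 ≤ C * t ^ (-(d : ℝ) / 2) :=
  srwP_diagonal_asymptotics_general d
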